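/- Let z = (L+K)^{-1}Ks, and define C = z^T L K^{-1} L z, D = z^T L z, P = z^T K z. Then the conservation law C + 2D + P = Σ_i k_i s_i^2 = s^T K s holds. -/

import Mathlib

/-!
Since `(L + K) z = K s`, the sum `C + 2D + P` is the quadratic form of
`(L + K) K⁻¹ (L + K) = L K⁻¹ L + 2L + K` at `z`; by symmetry of `L + K` it equals
`(K s)ᵀ K⁻¹ (K s) = sᵀ K s`. The matrix `L + K` is invertible because it is strictly
diagonally dominant (Gershgorin), as the weights are nonnegative and `K` is positive.
-/

open Matrix

section Conservation

variable {R ι : Type*} [CommRing R] [Fintype ι] [DecidableEq ι]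

theorem add_mul_mul_add_eq_of_mul_eq_one {L K K' : Matrix ι ι R}
    (hKK' : K * K' = 1) (hK'K : K' * K = 1) :
    (L + K) * K' * (L + K) = L * K' * L + L + L + K := by
  rw [add_mul, add_mul, mul_add, mul_add, Matrix.mul_assoc L K' K, hK'K, Matrix.mul_one, hKK',
    Matrix.one_mul, Matrix.one_mul]
  noncomm_ring

theorem quadForm_conservation_of_mulVec_eq {L K K' : Matrix ι ι R} {s z : ι → R}
    (hL : Lᵀ = L) (hK : Kᵀ = K) (hKK' : K * K' = 1) (hK'K : K' * K = 1)
    (hz : (L + K) *ᵥ z = K *ᵥ s) :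
    z ⬝ᵥ (L * K' * L) *ᵥ z + 2 * (z ⬝ᵥ L *ᵥ z) + z ⬝ᵥ K *ᵥ z = s ⬝ᵥ K *ᵥ s :=
  calc z ⬝ᵥ (L * K' * L) *ᵥ z + 2 * (z ⬝ᵥ L *ᵥ z) + z ⬝ᵥ K *ᵥ z
      = z ⬝ᵥ ((L + K) * K' * (L + K)) *ᵥ z := by
        rw [add_mul_mul_add_eq_of_mul_eq_one hKK' hK'K]
        simp only [add_mulVec, dotProduct_add]
        ring
    _ = ((L + K) *ᵥ z) ⬝ᵥ K' *ᵥ ((L + K) *ᵥ z) := by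
        rw [← mulVec_mulVec, ← mulVec_mulVec, dotProduct_mulVec z (L + K), ← mulVec_transpose,
          transpose_add, hL, hK]
    _ = s ⬝ᵥ K *ᵥ s := by
        rw [hz, mulVec_mulVec, hK'K, one_mulVec, dotProduct_comm]

end Conservation

section WeightedLaplacian

variable {ι : Type*} [Fintype ι] [DecidableEq ι]

def weightedLaplacian (w : ι → ι → ℝ) : Matrix ι ι ℝ :=
  of fun i j => if i = j then ∑ l, w i l else -w i j

theorem weightedLaplacian_transpose {w : ι → ι → ℝ} (hsymm : ∀ i j, w i j = w j i) :
    (weightedLaplacian w)ᵀ = weightedLaplacian w := by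
  ext i j
  by_cases h : i = j
  · subst h; rfl
  · simp [weightedLaplacian, h, Ne.symm h, hsymm i j]

theorem det_weightedLaplacian_add_diagonal_ne_zero {w : ι → ι → ℝ} (hnonneg : ∀ i j, 0 ≤ w i j)
    {k : ι → ℝ} (hk : ∀ i, 0 < k i) : (weightedLaplacian w + diagonal k).det ≠ 0 := by
  refine det_ne_zero_of_sum_row_lt_diag fun i => ?_
  have hdiag : 0 < ∑ l, w i l + k i :=
    add_pos_of_nonneg_of_pos (Finset.sum_nonneg fun l _ => hnonneg i l) (hk i)
  calc ∑ j ∈ Finset.univ.erase i, ‖(weightedLaplacian w + diagonal k) i j‖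
      = ∑ j ∈ Finset.univ.erase i, w i j := by
        refine Finset.sum_congr rfl fun j hj => ?_
        have hij : i ≠ j := (Finset.ne_of_mem_erase hj).symm
        simp [weightedLaplacian, hij, abs_of_nonneg (hnonneg i j)]
    _ ≤ ∑ l, w i l := Finset.sum_le_sum_of_subset_of_nonneg (Finset.erase_subset _ _)
        fun l _ _ => hnonneg i l
    _ < ‖(weightedLaplacian w + diagonal k) i i‖ := by
        simp [weightedLaplacian, abs_of_pos hdiag, hk i]

end WeightedLaplacian

section Diagonal

variable {R ι : Type*} [Fintype ι] [DecidableEq ι]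

theorem diagonal_mul_diagonal_inv [DivisionRing R] {k : ι → R}
    (hk : ∀ i, k i ≠ 0) : diagonal k * diagonal (fun i => (k i)⁻¹) = 1 := by
  rw [diagonal_mul_diagonal, ← diagonal_one]
  exact congrArg diagonal (funext fun i => mul_inv_cancel₀ (hk i))

theorem diagonal_inv_mul_diagonal [DivisionRing R] {k : ι → R}
    (hk : ∀ i, k i ≠ 0) : diagonal (fun i => (k i)⁻¹) * diagonal k = 1 := by
  rw [diagonal_mul_diagonal, ← diagonal_one]
  exact congrArg diagonal (funext fun i => inv_mul_cancel₀ (hk i))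

theorem dotProduct_diagonal_mulVec_self [CommRing R] (k s : ι → R) :
    s ⬝ᵥ diagonal k *ᵥ s = ∑ i, k i * s i ^ 2 := by
  simp only [dotProduct, mulVec_diagonal]
  exact Finset.sum_congr rfl fun i _ => by ring

end Diagonal

theorem stmt_17_general {n : ℕ}
    (w : Fin n → Fin n → ℝ)
    (hsymm : ∀ i j, w i j = w j i) (hnonneg : ∀ i j, 0 ≤ w i j)
    (L : Matrix (Fin n) (Fin n) ℝ)
    (hL : L = Matrix.of (fun i j => if i = j then ∑ l, w i l else -w i j))
    (k : Fin n → ℝ) (hk : ∀ i, 0 < k i)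
    (s z : Fin n → ℝ)
    (hz : z = (L + Matrix.diagonal k)⁻¹ *ᵥ (Matrix.diagonal k *ᵥ s))
    (C D P : ℝ)
    (hC : C = z ⬝ᵥ (L * Matrix.diagonal (fun i => (k i)⁻¹) * L) *ᵥ z)
    (hD : D = z ⬝ᵥ L *ᵥ z)
    (hP : P = z ⬝ᵥ Matrix.diagonal k *ᵥ z) :
    C + 2 * D + P = ∑ i, k i * s i ^ 2 ∧
      C + 2 * D + P = s ⬝ᵥ Matrix.diagonal k *ᵥ s := by
  change L = weightedLaplacian w at hL
  have hk₀ : ∀ i, k i ≠ 0 := fun i => (hk i).ne'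
  have hdet : IsUnit (L + diagonal k).det :=
    isUnit_iff_ne_zero.mpr (hL ▸ det_weightedLaplacian_add_diagonal_ne_zero hnonneg hk)
  have hMz : (L + diagonal k) *ᵥ z = diagonal k *ᵥ s := by
    rw [hz, mulVec_mulVec, mul_nonsing_inv _ hdet, one_mulVec]
  have hsum : C + 2 * D + P = s ⬝ᵥ diagonal k *ᵥ s := by
    rw [hC, hD, hP]
    exact quadForm_conservation_of_mulVec_eq (hL ▸ weightedLaplacian_transpose hsymm)
      (diagonal_transpose k) (diagonal_mul_diagonal_inv hk₀) (diagonal_inv_mul_diagonal hk₀) hMz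
  exact ⟨hsum.trans (dotProduct_diagonal_mulVec_self k s), hsum⟩

/-- Conservation law: with `C = zᵀ L K⁻¹ L z`, `D = zᵀ L z`, `P = zᵀ K z`,
one has `C + 2D + P = Σᵢ kᵢ sᵢ² = sᵀ K s`. -/
theorem stmt_17 {n : ℕ}
    (w : Fin n → Fin n → ℝ)
    (hsymm : ∀ i j, w i j = w j i) (hnonneg : ∀ i j, 0 ≤ w i j)
    (hdiag : ∀ i, w i i = 0)
    (hconn : (SimpleGraph.fromRel fun i j => 0 < w i j).Connected)
    (L : Matrix (Fin n) (Fin n) ℝ)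
    (hL : L = Matrix.of (fun i j => if i = j then ∑ l, w i l else -w i j))
    (k : Fin n → ℝ) (hk : ∀ i, 0 < k i)
    (s z : Fin n → ℝ)
    (hz : z = (L + Matrix.diagonal k)⁻¹ *ᵥ (Matrix.diagonal k *ᵥ s))
    (C D P : ℝ)
    (hC : C = z ⬝ᵥ (L * Matrix.diagonal (fun i => (k i)⁻¹) * L) *ᵥ z)
    (hD : D = z ⬝ᵥ L *ᵥ z)
    (hP : P = z ⬝ᵥ Matrix.diagonal k *ᵥ z) :
    C + 2 * D + P = ∑ i, k i * s i ^ 2 ∧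
      C + 2 * D + P = s ⬝ᵥ Matrix.diagonal k *ᵥ s :=
  stmt_17_general w hsymm hnonneg L hL k hk s z hz C D P hC hD hP
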